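/- arXiv:2307.05226 — 2 statements merged into one kernel-verified Lean document; each statement's English description precedes it below -/
import Mathlib

section
/- Let R be a commutative Noetherian ring with unit, Ω a free R-module of rank n with basis e₁,…,eₙ, and ω₁,…,ω_k ∈ Ω with 1 ≤ k ≤ n. Write ω₁ ∧ ⋯ ∧ ω_k = Σ a_{i₁,…,i_k} e_{i₁} ∧ ⋯ ∧ e_{i_k} and let 𝔞 be the ideal of R generated by all coefficients a_{i₁,…,i_k}. For each p, let Z^p = { ω ∈ Λ^p Ω : ω ∧ ω₁ ∧ ⋯ ∧ ω_k = 0 } and H^p = Z^p / (Σᵢ ωᵢ ∧ Λ^{p−1} Ω). Then there exists a non-negative integer m such that 𝔞^m · H^p = 0 for all p = 0, 1, …, n. -/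
open ExteriorAlgebra

/-- The `p`-th exterior power `Λ^p Ω` of `Ω = Rⁿ`, as a submodule of the exterior
algebra: the span of all products of `p` elements of `Ω`. -/
def extPow (R : Type*) [CommRing R] (n p : ℕ) :
    Submodule R (ExteriorAlgebra R (Fin n → R)) :=
  Submodule.span R
    {x | ∃ v : Fin p → (Fin n → R), x = (List.ofFn fun i => ι R (v i)).prod}

/-- The wedge product `ω₁ ∧ ⋯ ∧ ω_k` in the exterior algebra of `Rⁿ`. -/
def wedgeProd {R : Type*} [CommRing R] {n k : ℕ} (ω : Fin k → (Fin n → R)) :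
    ExteriorAlgebra R (Fin n → R) :=
  (List.ofFn fun i => ι R (ω i)).prod

/-- The ideal `𝔞` generated by the coefficients `a_{i₁,…,i_k}` of
`ω₁ ∧ ⋯ ∧ ω_k = Σ a_{i₁,…,i_k} e_{i₁} ∧ ⋯ ∧ e_{i_k}`; these coefficients are the
maximal minors of the `k × n` matrix of the `ωᵢ`. -/
def coeffIdeal {R : Type*} [CommRing R] {n k : ℕ} (ω : Fin k → (Fin n → R)) : Ideal R :=
  Ideal.span (Set.range fun s : Fin k ↪o Fin n =>
    Matrix.det (Matrix.of fun r c : Fin k => ω r (s c)))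

namespace SaitoAux
variable {R : Type*} [CommRing R] {N : Type*} [AddCommGroup N] [Module R N]

def epow (R : Type*) [CommRing R] (N : Type*) [AddCommGroup N] [Module R N] (p : ℕ) :
    Submodule R (ExteriorAlgebra R N) :=
  Submodule.span R {x | ∃ v : Fin p → N, x = (List.ofFn fun i => ι R (v i)).prod}

def wedge {j : ℕ} (g : Fin j → N) : ExteriorAlgebra R N :=
  (List.ofFn fun i => ι R (g i)).prod

def ctr (θ : Module.Dual R N) : ExteriorAlgebra R N →ₗ[R] ExteriorAlgebra R N :=
  CliffordAlgebra.contractLeft θ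

lemma ctr_ι_mul (θ : Module.Dual R N) (v : N) (x : ExteriorAlgebra R N) :
    ctr θ (ι R v * x) = θ v • x - ι R v * ctr θ x :=
  CliffordAlgebra.contractLeft_ι_mul θ v x

lemma ctr_one (θ : Module.Dual R N) : ctr θ (1 : ExteriorAlgebra R N) = 0 :=
  CliffordAlgebra.contractLeft_one _ _

lemma wedge_zero (g : Fin 0 → N) : wedge g = (1 : ExteriorAlgebra R N) := by
  simp [wedge]

lemma wedge_succ {j : ℕ} (g : Fin (j+1) → N) :
    wedge g = ι R (g 0) * wedge (g ∘ Fin.succ) := by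
  rw [wedge, List.ofFn_succ, List.prod_cons]; rfl

lemma wedge_mem {j : ℕ} (g : Fin j → N) : wedge g ∈ epow R N j :=
  Submodule.subset_span ⟨g, rfl⟩

lemma one_mem_epow : (1 : ExteriorAlgebra R N) ∈ epow R N 0 := by
  simpa [wedge] using wedge_mem (R := R) (fun i : Fin 0 => i.elim0)

lemma ι_mul_mem {p : ℕ} (v : N) {x : ExteriorAlgebra R N} (hx : x ∈ epow R N p) :
    ι R v * x ∈ epow R N (p + 1) := by
  induction hx using Submodule.span_induction with
  | mem x hx =>
      obtain ⟨w, rfl⟩ := hx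
      exact Submodule.subset_span ⟨Fin.cons v w, by
        rw [List.ofFn_succ, List.prod_cons]; simp⟩
  | zero => simp
  | add x y _ _ hx hy => rw [mul_add]; exact add_mem hx hy
  | smul a x _ hx => rw [mul_smul_comm]; exact Submodule.smul_mem _ a hx

lemma ι_swap (a b : N) : ι R a * ι R b = -(ι R b * ι R a) :=
  eq_neg_of_add_eq_zero_left (ι_add_mul_swap a b)

lemma wedge_mul_ι : ∀ {q : ℕ} (w : Fin q → N) (v : N),
    wedge w * ι R v = ((-1 : R) ^ q) • (ι R v * wedge w) := by
  intro q
  induction q with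
  | zero => intro w v; simp [wedge_zero]
  | succ q ih =>
      intro w v
      rw [wedge_succ, mul_assoc, ih (w ∘ Fin.succ) v, mul_smul_comm, ← mul_assoc,
        ι_swap (w 0) v, neg_mul, mul_assoc, pow_succ, mul_comm _ (-1 : R), mul_smul,
        neg_one_smul, smul_neg]

lemma mul_ι_comm {q : ℕ} {y : ExteriorAlgebra R N} (hy : y ∈ epow R N q) (v : N) :
    y * ι R v = ((-1 : R) ^ q) • (ι R v * y) := by
  induction hy using Submodule.span_induction with
  | mem x hx => obtain ⟨w, rfl⟩ := hx; exact wedge_mul_ι w v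
  | zero => simp
  | add x y _ _ hx hy => rw [add_mul, hx, hy, mul_add, smul_add]
  | smul a x _ hx => rw [smul_mul_assoc, hx, mul_smul_comm, smul_comm]

lemma mul_wedge_mem : ∀ {j : ℕ} (h : Fin j → N) {q : ℕ} {y : ExteriorAlgebra R N},
    y ∈ epow R N q → y * wedge h ∈ epow R N (q + j) := by
  intro j
  induction j with
  | zero => intro h q y hy; rw [wedge_zero, mul_one]; exact hy
  | succ j ih =>
      intro h q y hy
      rw [wedge_succ, ← mul_assoc, mul_ι_comm hy (h 0)]
      rw [show q + (j+1) = (q+1) + j by omega]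
      rw [smul_mul_assoc]
      exact Submodule.smul_mem _ _ (ih (h ∘ Fin.succ) (ι_mul_mem (h 0) hy))

/-- contraction of `Λ^0` is zero -/
lemma ctr_epow_zero (θ : Module.Dual R N) {y : ExteriorAlgebra R N} (hy : y ∈ epow R N 0) :
    ctr θ y = 0 := by
  induction hy using Submodule.span_induction with
  | mem x hx =>
      obtain ⟨w, rfl⟩ := hx
      simp [List.ofFn_zero, ctr_one]
  | zero => simp
  | add x y _ _ hx hy => rw [map_add, hx, hy, add_zero]
  | smul a x _ hx => rw [map_smul, hx, smul_zero]

/-- contraction lowers degree by one -/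
lemma ctr_mem (θ : Module.Dual R N) : ∀ {p : ℕ} {y : ExteriorAlgebra R N},
    y ∈ epow R N p → ctr θ y ∈ epow R N (p - 1) := by
  intro p
  induction p with
  | zero => intro y hy; rw [ctr_epow_zero θ hy]; exact zero_mem _
  | succ p ih =>
      intro y hy
      induction hy using Submodule.span_induction with
      | mem x hx =>
          obtain ⟨w, rfl⟩ := hx
          rw [List.ofFn_succ, List.prod_cons, ctr_ι_mul]
          refine sub_mem (Submodule.smul_mem _ _ ?_) ?_
          · exact Submodule.subset_span ⟨w ∘ Fin.succ, rfl⟩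
          · rcases p with _ | p
            · have : ctr θ (List.ofFn fun i => ι R ((w ∘ Fin.succ) i)).prod = 0 :=
                ctr_epow_zero θ (Submodule.subset_span ⟨w ∘ Fin.succ, rfl⟩)
              simp only [Function.comp] at this ⊢
              rw [this, mul_zero]; exact zero_mem _
            · have h1 : ctr θ (List.ofFn fun i => ι R ((w ∘ Fin.succ) i)).prod
                  ∈ epow R N (p + 1 - 1) := ih (Submodule.subset_span ⟨w ∘ Fin.succ, rfl⟩)
              simpa using ι_mul_mem (w 0) h1
      | zero => simp
      | add x y _ _ hx hy => rw [map_add]; exact add_mem hx hy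
      | smul a x _ hx => rw [map_smul]; exact Submodule.smul_mem _ _ hx

/-- super-Leibniz rule for contraction against a homogeneous left factor -/
lemma ctr_leibniz_wedge (θ : Module.Dual R N) : ∀ {p : ℕ} (w : Fin p → N)
    (x : ExteriorAlgebra R N),
    ctr θ (wedge w * x) = ctr θ (wedge w) * x + ((-1 : R) ^ p) • (wedge w * ctr θ x) := by
  intro p
  induction p with
  | zero => intro w x; rw [wedge_zero]; simp [ctr_one]
  | succ p ih =>
      intro w x
      rw [wedge_succ, mul_assoc, ctr_ι_mul, ih (w ∘ Fin.succ) x,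
        ctr_ι_mul θ (w 0) (wedge (w ∘ Fin.succ))]
      simp only [mul_add, sub_mul, mul_smul_comm, smul_mul_assoc, mul_assoc, pow_succ,
        smul_smul]
      module

lemma ctr_leibniz (θ : Module.Dual R N) {p : ℕ} {z : ExteriorAlgebra R N}
    (hz : z ∈ epow R N p) (x : ExteriorAlgebra R N) :
    ctr θ (z * x) = ctr θ z * x + ((-1 : R) ^ p) • (z * ctr θ x) := by
  induction hz using Submodule.span_induction with
  | mem z hz => obtain ⟨w, rfl⟩ := hz; exact ctr_leibniz_wedge θ w x
  | zero => simp
  | add y z _ _ hy hz =>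
      rw [add_mul, map_add, map_add, hy, hz, add_mul, add_mul, smul_add]
      abel
  | smul a y _ hy =>
      rw [smul_mul_assoc, map_smul, map_smul, hy, smul_add, smul_mul_assoc,
        smul_comm, smul_mul_assoc]


/-- contraction of a wedge of `j+1` vectors -/
lemma ctr_wedge (θ : Module.Dual R N) : ∀ {j : ℕ} (g : Fin (j+1) → N),
    ctr θ (wedge g) =
      ∑ t : Fin (j+1), ((-1 : R) ^ (t : ℕ) * θ (g t)) • wedge (g ∘ t.succAbove) := by
  intro j
  induction j with
  | zero =>
      intro g
      rw [wedge_succ, ctr_ι_mul, wedge_zero, ctr_one, Fin.sum_univ_one]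
      rw [wedge_zero]
      simp
  | succ j ih =>
      intro g
      rw [wedge_succ, ctr_ι_mul, ih (g ∘ Fin.succ), Finset.mul_sum]
      conv_rhs => rw [Fin.sum_univ_succ]
      have h0 : (wedge (g ∘ (0 : Fin (j+2)).succAbove) : ExteriorAlgebra R N) = wedge (g ∘ Fin.succ) := by
        rw [Fin.succAbove_zero]
      rw [h0]
      rw [sub_eq_add_neg, ← Finset.sum_neg_distrib]
      congr 1
      · simp
      · refine Finset.sum_congr rfl fun s _ => ?_
        have hw : (wedge (g ∘ (Fin.succ s).succAbove) : ExteriorAlgebra R N) =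
            ι R (g 0) * wedge ((g ∘ Fin.succ) ∘ s.succAbove) := by
          rw [wedge_succ]
          have e1 : (g ∘ (Fin.succ s).succAbove) 0 = g 0 := by
            simp [Function.comp]
          have e2 : (g ∘ (Fin.succ s).succAbove) ∘ Fin.succ = (g ∘ Fin.succ) ∘ s.succAbove := by
            funext r
            simp [Function.comp, Fin.succ_succAbove_succ]
          rw [e1, e2]
        rw [hw, mul_smul_comm, ← neg_smul]
        congr 1
        simp [Fin.val_succ, pow_succ]

variable (R N) in
/-- The error submodule: spanned by `y * ω_{i₁} ⋯ ω_{i_j}` with `y ∈ Λ^q`, `q + j = p`,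
`j ≥ r`. -/
def Err {k : ℕ} (ω : Fin k → N) (r p : ℕ) : Submodule R (ExteriorAlgebra R N) :=
  Submodule.span R {x | ∃ (j q : ℕ) (g : Fin j → Fin k) (y : ExteriorAlgebra R N),
    r ≤ j ∧ q + j = p ∧ y ∈ epow R N q ∧ x = y * wedge (ω ∘ g)}

lemma gen_mem_err {k : ℕ} {ω : Fin k → N} {r p j q : ℕ} (g : Fin j → Fin k)
    {y : ExteriorAlgebra R N} (hy : y ∈ epow R N q) (hj : r ≤ j) (hq : q + j = p) :
    y * wedge (ω ∘ g) ∈ Err R N ω r p :=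
  Submodule.subset_span ⟨j, q, g, y, hj, hq, hy, rfl⟩

lemma err_mono {k : ℕ} {ω : Fin k → N} {r' r p : ℕ} (h : r' ≤ r) :
    Err R N ω r p ≤ Err R N ω r' p := by
  apply Submodule.span_mono
  rintro x ⟨j, q, g, y, hj, hq, hy, rfl⟩
  exact ⟨j, q, g, y, le_trans h hj, hq, hy, rfl⟩

lemma err_map {k k' : ℕ} {ω : Fin k → N} (f : Fin k' → Fin k) {r p : ℕ} :
    Err R N (ω ∘ f) r p ≤ Err R N ω r p := by
  apply Submodule.span_mono
  rintro x ⟨j, q, g, y, hj, hq, hy, rfl⟩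
  exact ⟨j, q, f ∘ g, y, hj, hq, hy, rfl⟩

lemma ctr_err {k : ℕ} {ω : Fin k → N} (θ : Module.Dual R N) {r p : ℕ}
    {x : ExteriorAlgebra R N} (hx : x ∈ Err R N ω r p) :
    ctr θ x ∈ Err R N ω (r - 1) (p - 1) := by
  induction hx using Submodule.span_induction with
  | mem x hx =>
      obtain ⟨j, q, g, y, hj, hq, hy, rfl⟩ := hx
      rw [ctr_leibniz θ hy]
      refine add_mem ?_ ?_
      · rcases q with _ | q
        · rw [ctr_epow_zero θ hy, zero_mul]; exact zero_mem _
        · exact gen_mem_err g (ctr_mem θ hy) (le_trans (Nat.sub_le r 1) hj) (by omega)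
      · rcases j with _ | j
        · have : wedge (ω ∘ g) = (1 : ExteriorAlgebra R N) := wedge_zero _
          rw [this, ctr_one, mul_zero, smul_zero]; exact zero_mem _
        · rw [ctr_wedge θ (ω ∘ g), Finset.mul_sum, Finset.smul_sum]
          refine Submodule.sum_mem _ fun t _ => ?_
          rw [mul_smul_comm, smul_smul]
          exact Submodule.smul_mem _ _
            (gen_mem_err (g ∘ t.succAbove) hy (by omega) (by omega))
  | zero => rw [map_zero]; exact zero_mem _
  | add x y _ _ hx hy => rw [map_add]; exact add_mem hx hy
  | smul a x _ hx => rw [map_smul]; exact Submodule.smul_mem _ _ hx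

/-- iterated contraction -/
def Dc : ∀ {c : ℕ}, (Fin c → Module.Dual R N) → ExteriorAlgebra R N →ₗ[R] ExteriorAlgebra R N
  | 0, _ => LinearMap.id
  | c+1, θ => (Dc (Fin.init θ)).comp (ctr (θ (Fin.last c)))

lemma Dc_err {k : ℕ} {ω : Fin k → N} : ∀ {c : ℕ} (θ : Fin c → Module.Dual R N) {r p : ℕ}
    {x : ExteriorAlgebra R N}, x ∈ Err R N ω r p → Dc θ x ∈ Err R N ω (r - c) (p - c) := by
  intro c
  induction c with
  | zero => intro θ r p x hx; simpa [Dc] using hx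
  | succ c ih =>
      intro θ r p x hx
      have h1 : ctr (θ (Fin.last c)) x ∈ Err R N ω (r - 1) (p - 1) := ctr_err _ hx
      have h2 := ih (Fin.init θ) h1
      rw [show r - 1 - c = r - (c+1) by omega, show p - 1 - c = p - (c+1) by omega] at h2
      exact h2


variable (R) in
/-- the sign `±1` appearing in the main lemma -/
def sg : ℕ → ℕ → R
  | 0, _ => 1
  | (k+1), p => (-1 : R) ^ (p + k) * sg k p

lemma neg_one_pow_mul_self (m : ℕ) : ((-1 : R) ^ m) * ((-1 : R) ^ m) = 1 := by
  rw [← pow_add, ← two_mul, pow_mul, neg_one_sq, one_pow]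

lemma sg_mul_self (k p : ℕ) : sg R k p * sg R k p = 1 := by
  induction k with
  | zero => simp [sg]
  | succ k ih =>
      show ((-1 : R) ^ (p + k) * sg R k p) * ((-1 : R) ^ (p + k) * sg R k p) = 1
      rw [mul_mul_mul_comm, neg_one_pow_mul_self, one_mul, ih]

/-- Main lemma: iterated contraction of `z * ω₁⋯ω_k` equals `± det(θᵢ(ωⱼ)) • z` up to
an error term. -/
lemma main_T : ∀ {k : ℕ} (θ : Fin k → Module.Dual R N) (ω : Fin k → N) {p : ℕ}
    {z : ExteriorAlgebra R N}, z ∈ epow R N p →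
    sg R k p • ((Matrix.of fun i j => θ i (ω j)).det • z) - Dc θ (z * wedge ω)
      ∈ Err R N ω 1 p := by
  intro k
  induction k with
  | zero =>
      intro θ ω p z hz
      have h1 : (wedge ω : ExteriorAlgebra R N) = 1 := wedge_zero ω
      rw [h1, mul_one, Matrix.det_fin_zero]
      have h2 : Dc θ z = z := rfl
      rw [h2]
      simp only [sg, one_smul, sub_self]
      exact zero_mem _
  | succ k ih =>
      intro θ ω p z hz
      have hθL : θ (Fin.last k) = θ (Fin.last k) := rfl
      set θL := θ (Fin.last k) with hθLdef
      have h1 : ctr θL (z * wedge ω)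
          = ctr θL z * wedge ω + ((-1 : R) ^ p) • (z * ctr θL (wedge ω)) :=
        ctr_leibniz θL hz _
      have h2 : ctr θL (wedge ω) = ∑ t : Fin (k+1),
          ((-1 : R) ^ (t : ℕ) * θL (ω t)) • wedge (ω ∘ t.succAbove) := ctr_wedge θL ω
      set A := Dc (Fin.init θ) (ctr θL z * wedge ω) with hA
      set c : Fin (k+1) → R := fun t => (-1 : R) ^ p * ((-1 : R) ^ (t : ℕ) * θL (ω t))
        with hc
      set B : Fin (k+1) → ExteriorAlgebra R N :=
        fun t => Dc (Fin.init θ) (z * wedge (ω ∘ t.succAbove)) with hB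
      set M : Fin (k+1) → R :=
        fun t => (Matrix.of fun i j => (Fin.init θ) i ((ω ∘ t.succAbove) j)).det with hM
      have hD : Dc θ (z * wedge ω) = A + ∑ t, c t • B t := by
        have : Dc θ (z * wedge ω) = Dc (Fin.init θ) (ctr θL (z * wedge ω)) := rfl
        rw [this, h1, map_add, map_smul, h2, Finset.mul_sum]
        congr 1
        rw [map_sum, Finset.smul_sum]
        refine Finset.sum_congr rfl fun t _ => ?_
        rw [mul_smul_comm, map_smul, smul_smul]
      have hAmem : A ∈ Err R N ω 1 p := by
        rcases p with _ | p'
        · have h0 : ctr θL z = 0 := ctr_epow_zero θL hz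
          rw [hA, h0, zero_mul, map_zero]
          exact zero_mem _
        · have hy : ctr θL z ∈ epow R N p' := by
            simpa using ctr_mem θL hz
          have hgen : ctr θL z * wedge (ω ∘ (id : Fin (k+1) → Fin (k+1)))
              ∈ Err R N ω (k+1) (p' + (k+1)) := gen_mem_err id hy le_rfl rfl
          have hgen' : ctr θL z * wedge ω ∈ Err R N ω (k+1) (p' + (k+1)) := by
            simpa [Function.comp] using hgen
          have h3 := Dc_err (Fin.init θ) hgen'
          rw [show (k+1) - k = 1 by omega, show p' + (k+1) - k = p' + 1 by omega] at h3
          exact h3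
      have hBt : ∀ t : Fin (k+1),
          sg R k p • (M t • z) - B t ∈ Err R N ω 1 p := fun t =>
        err_map t.succAbove (ih (Fin.init θ) (ω ∘ t.succAbove) hz)
      have key : sg R (k+1) p * (Matrix.of fun i j => θ i (ω j)).det
          = ∑ t, c t * (sg R k p * M t) := by
        have hdet := Matrix.det_succ_row (Matrix.of fun i j => θ i (ω j)) (Fin.last k)
        have hsub : ∀ t : Fin (k+1),
            ((Matrix.of fun i j => θ i (ω j)).submatrix (Fin.last k).succAbove t.succAbove)
              = (Matrix.of fun i j => (Fin.init θ) i ((ω ∘ t.succAbove) j)) := by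
          intro t
          ext i j
          simp [Matrix.submatrix_apply, Fin.succAbove_last, Fin.init]
        rw [hdet, Finset.mul_sum]
        refine Finset.sum_congr rfl fun t _ => ?_
        rw [hsub t]
        have hOf : (Matrix.of fun i j => θ i (ω j)) (Fin.last k) t = θL (ω t) := rfl
        rw [hOf]
        have hlast : ((Fin.last k : Fin (k+1)) : ℕ) = k := rfl
        rw [hlast]
        show (-1 : R) ^ (p + k) * sg R k p * ((-1 : R) ^ (k + (t : ℕ)) * θL (ω t) * M t)
          = (-1 : R) ^ p * ((-1 : R) ^ (t : ℕ) * θL (ω t)) * (sg R k p * M t)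
        have h4 := neg_one_pow_mul_self (R := R) k
        linear_combination ((-1 : R) ^ p * (-1 : R) ^ (t : ℕ) * θL (ω t) * sg R k p * M t) * h4
      have hzsum : sg R (k+1) p • ((Matrix.of fun i j => θ i (ω j)).det • z)
          = ∑ t, c t • (sg R k p • (M t • z)) := by
        rw [smul_smul, key, Finset.sum_smul]
        refine Finset.sum_congr rfl fun t _ => ?_
        simp only [hc, smul_smul]
      have expand : sg R (k+1) p • ((Matrix.of fun i j => θ i (ω j)).det • z)
            - Dc θ (z * wedge ω)
          = -A + ∑ t, c t • (sg R k p • (M t • z) - B t) := by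
        rw [hD, hzsum]
        rw [show (∑ t, c t • (sg R k p • (M t • z) - B t))
            = ∑ t, c t • (sg R k p • (M t • z)) - ∑ t, c t • B t by
          rw [← Finset.sum_sub_distrib]
          exact Finset.sum_congr rfl fun t _ => smul_sub _ _ _]
        abel
      rw [expand]
      exact add_mem (neg_mem hAmem)
        (Submodule.sum_mem _ fun t _ => Submodule.smul_mem _ _ (hBt t))


variable (R N) in
/-- The submodule `Σᵢ ωᵢ ∧ Λ^{p-1}`, described by explicit representations. -/
def Pp {k : ℕ} (ω : Fin k → N) (p : ℕ) : Submodule R (ExteriorAlgebra R N) where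
  carrier := {x | ∃ ξ : Fin k → ExteriorAlgebra R N,
    (∀ i, ξ i ∈ epow R N (p - 1)) ∧ x = ∑ i, ι R (ω i) * ξ i}
  add_mem' := by
    rintro x y ⟨ξ, hξ, rfl⟩ ⟨η, hη, rfl⟩
    exact ⟨ξ + η, fun i => add_mem (hξ i) (hη i), by
      simp [mul_add, Finset.sum_add_distrib]⟩
  zero_mem' := ⟨0, fun i => zero_mem _, by simp⟩
  smul_mem' := by
    rintro a x ⟨ξ, hξ, rfl⟩
    exact ⟨a • ξ, fun i => Submodule.smul_mem _ _ (hξ i), by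
      simp [Finset.smul_sum, mul_smul_comm]⟩

lemma mem_Pp_iff {k : ℕ} {ω : Fin k → N} {p : ℕ} {x : ExteriorAlgebra R N} :
    x ∈ Pp R N ω p ↔ ∃ ξ : Fin k → ExteriorAlgebra R N,
      (∀ i, ξ i ∈ epow R N (p - 1)) ∧ x = ∑ i, ι R (ω i) * ξ i := Iff.rfl

lemma err_le_Pp {k : ℕ} (ω : Fin k → N) (p : ℕ) : Err R N ω 1 p ≤ Pp R N ω p := by
  rw [Err, Submodule.span_le]
  rintro x ⟨j, q, g, y, hj, hq, hy, rfl⟩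
  rcases j with _ | j'
  · omega
  have hw : (wedge (ω ∘ g) : ExteriorAlgebra R N)
      = ι R (ω (g 0)) * wedge ((ω ∘ g) ∘ Fin.succ) := wedge_succ _
  have hyw : y * wedge ((ω ∘ g) ∘ Fin.succ) ∈ epow R N (q + j') :=
    mul_wedge_mem _ hy
  have key : y * wedge (ω ∘ g)
      = ι R (ω (g 0)) * ((-1:R)^q • (y * wedge ((ω ∘ g) ∘ Fin.succ))) := by
    rw [hw, ← mul_assoc, mul_ι_comm hy, smul_mul_assoc, mul_smul_comm, mul_assoc]
  refine ⟨fun i => if i = g 0 then (-1:R)^q • (y * wedge ((ω ∘ g) ∘ Fin.succ)) else 0,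
    ?_, ?_⟩
  · intro i
    dsimp only
    by_cases h : i = g 0
    · rw [if_pos h, show p - 1 = q + j' by omega]
      exact Submodule.smul_mem _ _ hyw
    · rw [if_neg h]; exact zero_mem _
  · rw [key, Finset.sum_eq_single (g 0)
      (fun b _ hb => by dsimp only; rw [if_neg hb, mul_zero])
      (fun h => absurd (Finset.mem_univ _) h)]
    dsimp only
    rw [if_pos rfl]

end SaitoAux


/-- Saito's generalized Koszul cohomology theorem (de Rham–Saito lemma), first part:
there is `m ≥ 0` with `𝔞^m · H^p = 0` for `p = 0, 1, …, n`, i.e. whenever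
`z ∈ Λ^p Ω` satisfies `z ∧ ω₁ ∧ ⋯ ∧ ω_k = 0` and `a ∈ 𝔞^m`, then
`a • z ∈ Σᵢ ωᵢ ∧ Λ^{p-1} Ω`. -/
theorem saito_koszul_part1 {R : Type*} [CommRing R] [IsNoetherianRing R]
    {n k : ℕ} (hk1 : 1 ≤ k) (hkn : k ≤ n) (ω : Fin k → (Fin n → R)) :
    ∃ m : ℕ, ∀ p : ℕ, p ≤ n → ∀ a ∈ (coeffIdeal ω) ^ m,
      ∀ z ∈ extPow R n p, z * wedgeProd ω = 0 →
        ∃ ξ : Fin k → ExteriorAlgebra R (Fin n → R),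
          (∀ i, ξ i ∈ extPow R n (p - 1)) ∧
          a • z = ∑ i, ι R (ω i) * ξ i := by
  refine ⟨1, ?_⟩
  intro p _hp a ha z hz hzw
  rw [pow_one] at ha
  have hz' : z ∈ SaitoAux.epow R (Fin n → R) p := hz
  have hgen : ∀ s : Fin k ↪o Fin n,
      (Matrix.det (Matrix.of fun r c : Fin k => ω r (s c))) • z
        ∈ SaitoAux.Pp R (Fin n → R) ω p := by
    intro s
    set θ : Fin k → Module.Dual R (Fin n → R) := fun i => LinearMap.proj (s i) with hθ
    have hT := SaitoAux.main_T θ ω hz'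
    have hzero : z * SaitoAux.wedge ω = 0 := hzw
    rw [hzero, map_zero, sub_zero] at hT
    have hdet : (Matrix.of fun i j => θ i (ω j)).det
        = (Matrix.of fun r c : Fin k => ω r (s c)).det := by
      rw [← Matrix.det_transpose]
      congr 1
    rw [hdet] at hT
    have h2 := Submodule.smul_mem _ (SaitoAux.sg R k p) hT
    rw [smul_smul, SaitoAux.sg_mul_self, one_smul] at h2
    exact SaitoAux.err_le_Pp ω p h2
  have hideal : coeffIdeal ω ≤ Submodule.comap
      (LinearMap.toSpanSingleton R (ExteriorAlgebra R (Fin n → R)) z)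
      (SaitoAux.Pp R (Fin n → R) ω p) := by
    rw [coeffIdeal, Ideal.span_le]
    rintro x ⟨s, rfl⟩
    have := hgen s
    simpa [Submodule.mem_comap, LinearMap.toSpanSingleton_apply] using this
  have hfin := hideal ha
  rw [Submodule.mem_comap, LinearMap.toSpanSingleton_apply] at hfin
  exact hfin
end

section
/- In the special case k = 1 of Saito's lemma: let R be a Noetherian ring, Ω free of rank n over R, ω ∈ Ω with coordinates a₁,…,aₙ in a basis, and suppose (a₁,…,aₙ) contains an R-regular sequence of length ≥ 2 (depth of the coefficient ideal is ≥ 2). Then every η ∈ Ω with η ∧ ω = 0 is of the form η = c·ω for some c ∈ R. -/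
open Pointwise


/-- The de Rham division lemma (the case `k = 1`, `p = 1` of Saito's theorem): let `R`
be a Noetherian ring and `ω ∈ Ω = Rⁿ` with coordinates `a₁, …, aₙ` whose ideal contains
an `R`-regular sequence of length `2`. If `η ∈ Ω` satisfies `η ∧ ω = 0` (i.e. all
`2 × 2` minors `ηᵢ ωⱼ - ηⱼ ωᵢ` vanish), then `η = c • ω` for some `c ∈ R`. -/
theorem deRham_division {R : Type*} [CommRing R] [IsNoetherianRing R] {n : ℕ}
    (ω : Fin n → R)
    (hdepth : ∃ rs : List R, rs.length = 2 ∧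
      (∀ x ∈ rs, x ∈ Ideal.span (Set.range ω)) ∧ RingTheory.Sequence.IsRegular R rs)
    (η : Fin n → R) (hwedge : ∀ i j, η i * ω j - η j * ω i = 0) :
    ∃ c : R, η = c • ω := by
  obtain ⟨rs, hlen, hmem, hreg⟩ := hdepth
  rcases rs with _ | ⟨x, _ | ⟨y, _ | ⟨z, rs⟩⟩⟩ <;> simp at hlen
  rw [RingTheory.Sequence.isRegular_cons_iff] at hreg
  obtain ⟨hx, hreg⟩ := hreg
  rw [RingTheory.Sequence.isRegular_cons_iff] at hreg
  obtain ⟨hy, -⟩ := hreg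
  have hxmem := hmem x (by simp)
  have hymem := hmem y (by simp)
  rw [Ideal.span, Submodule.mem_span_range_iff_exists_fun] at hxmem hymem
  obtain ⟨b, hb⟩ := hxmem
  obtain ⟨c, hc⟩ := hymem
  set s : R := ∑ i, b i * η i with hs
  set t : R := ∑ i, c i * η i with ht
  have hminor : ∀ i j, η i * ω j = η j * ω i := fun i j => by
    linear_combination hwedge i j
  have hxη : ∀ j, x * η j = s * ω j := by
    intro j
    rw [← hb, hs, Finset.sum_mul, Finset.sum_mul]
    refine Finset.sum_congr rfl fun i _ => ?_
    rw [smul_eq_mul]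
    linear_combination b i * hminor j i
  have hyη : ∀ j, y * η j = t * ω j := by
    intro j
    rw [← hc, ht, Finset.sum_mul, Finset.sum_mul]
    refine Finset.sum_congr rfl fun i _ => ?_
    rw [smul_eq_mul]
    linear_combination c i * hminor j i
  have hcross : ∀ j, (x * t - y * s) * ω j = 0 := by
    intro j
    linear_combination y * hxη j - x * hyη j
  have hkill : ∀ u : R, (∀ j, u * ω j = 0) → u * x = 0 := by
    intro u h
    rw [← hb, Finset.mul_sum]
    refine Finset.sum_eq_zero fun i _ => ?_
    rw [smul_eq_mul]
    linear_combination u * (by rfl : b i * ω i = b i * ω i) + b i * h i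
  have hzero : x * t - y * s = 0 := by
    apply hx
    have := hkill _ hcross
    simpa [smul_eq_mul, mul_comm] using this
  have htop : (x • ⊤ : Submodule R R) = Ideal.span {x} := by
    rw [← Submodule.ideal_span_singleton_smul, smul_eq_mul, Ideal.mul_top]
  have hmk : y • (Submodule.Quotient.mk s : QuotSMulTop x R) = 0 := by
    rw [← Submodule.Quotient.mk_smul, Submodule.Quotient.mk_eq_zero, htop,
      Ideal.mem_span_singleton', smul_eq_mul]
    exact ⟨t, by linear_combination hzero⟩
  have hmk0 : (Submodule.Quotient.mk s : QuotSMulTop x R) = 0 :=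
    hy (show y • (Submodule.Quotient.mk s : QuotSMulTop x R) = y • 0 by
      rw [smul_zero]; exact hmk)
  rw [Submodule.Quotient.mk_eq_zero, htop, Ideal.mem_span_singleton'] at hmk0
  obtain ⟨c₀, hc₀⟩ := hmk0
  refine ⟨c₀, funext fun j => hx ?_⟩
  simp only [smul_eq_mul, Pi.smul_apply]
  rw [hxη j, ← hc₀]
  ring
end
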